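/- Let q be a prime power with q > 2. For every permutation σ of F_q there exists an exceptional polynomial f over F_q inducing σ: that is, there is a polynomial f ∈ F_q[x] such that f(x) = σ(x) for all x ∈ F_q, and such that f induces a permutation of F_{q^k} for infinitely many positive integers k. -/

import Mathlib

/-!
Carlitz's argument. Permutations of `F = 𝔽_q` induced by polynomials that permute `𝔽_{q^k}` for
every `k` in a fixed set `S` are closed under composition, hence form a submonoid of the finite
group `Perm F`. Affine maps permute every extension, and `x ^ (q - 2)`, which induces `x ↦ x⁻¹`
on `F`, permutes `𝔽_{q^k}` whenever `gcd (q - 2) (q ^ k - 1) = 1`. As `(0 1)` is a product of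
affine maps and inversions, and every transposition is an affine conjugate of it, the submonoid
is everything once `S` consists of such `k`. There are infinitely many of them: `q ≡ 2` modulo
`q - 2`, and `2 ^ k - 1` is odd and `≡ 1` modulo the odd part `m` of `q - 2` when
`k ≡ 1 [MOD φ m]`.
-/

open Polynomial Function

namespace Nat

theorem coprime_two_pow_one_add_mul_totient_sub_one {n : ℕ} (hn : n ≠ 0) (t : ℕ) :
    n.Coprime (2 ^ (1 + t * φ (ordCompl[2] n)) - 1) := by
  set k := 1 + t * φ (ordCompl[2] n)
  have hodd : Odd (2 ^ k - 1) :=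
    Even.sub_odd Nat.one_le_two_pow (by simp [k, Nat.even_pow]) odd_one
  -- Euler's theorem for the odd part `m` of `n`: `2 ^ k ≡ 2`, so `2 ^ k - 1 ≡ 1 [MOD m]`.
  have hmod : 2 ^ k - 1 ≡ 1 [MOD ordCompl[2] n] := by
    refine Nat.ModEq.add_right_cancel' 1 ?_
    rw [Nat.sub_add_cancel Nat.one_le_two_pow]
    calc 2 ^ k = 2 * (2 ^ φ (ordCompl[2] n)) ^ t := by simp only [k]; ring
      _ ≡ 2 * 1 ^ t [MOD ordCompl[2] n] :=
        ((Nat.ModEq.pow_totient (coprime_ordCompl prime_two hn)).pow t).mul_left 2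
      _ = 1 + 1 := by simp
  rw [← ordProj_mul_ordCompl_eq_self n 2]
  exact .mul_left (.pow_left _ (coprime_two_left.mpr hodd))
    (coprime_comm.mp (hmod.gcd_eq.trans (gcd_one_left _)))

theorem coprime_sub_two_pow_sub_one_iff {q : ℕ} (hq : 2 ≤ q) (k : ℕ) :
    (q - 2).Coprime (q ^ k - 1) ↔ (q - 2).Coprime (2 ^ k - 1) := by
  have hmod : 2 ^ k - 1 ≡ q ^ k - 1 [MOD q - 2] := by
    refine Nat.ModEq.add_right_cancel' 1 ?_
    rw [Nat.sub_add_cancel Nat.one_le_two_pow, Nat.sub_add_cancel (one_le_pow _ _ (by omega))]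
    exact ((modEq_iff_dvd' hq).mpr dvd_rfl).pow k
  rw [coprime_comm, Coprime, ← hmod.gcd_eq, ← Coprime, coprime_comm]

theorem setOf_coprime_sub_two_pow_sub_one_infinite {q : ℕ} (hq : 2 < q) :
    {k | 0 < k ∧ (q - 2).Coprime (q ^ k - 1)}.Infinite := by
  have hφ : 0 < φ (ordCompl[2] (q - 2)) := totient_pos.mpr (ordCompl_pos 2 (by omega))
  refine Set.infinite_of_injective_forall_mem (f := fun t => 1 + t * φ (ordCompl[2] (q - 2)))
    (fun a b hab => Nat.eq_of_mul_eq_mul_right hφ (by simpa using hab)) fun t => ?_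
  exact ⟨by omega, (coprime_sub_two_pow_sub_one_iff hq.le _).mpr
    (coprime_two_pow_one_add_mul_totient_sub_one (by omega) t)⟩

end Nat

theorem FiniteField.pow_bijective_of_coprime {K : Type*} [Field K] [Finite K] {n : ℕ}
    (hn : n ≠ 0) (h : n.Coprime (Nat.card K - 1)) : Bijective fun x : K => x ^ n := by
  refine Finite.injective_iff_bijective.mp fun x y hxy => ?_
  obtain rfl | hx := eq_or_ne x 0
  · exact ((pow_eq_zero_iff hn).mp (hxy.symm.trans (zero_pow hn))).symm
  obtain rfl | hy := eq_or_ne y 0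
  · exact (pow_eq_zero_iff hn).mp (hxy.trans (zero_pow hn))
  have hunits : (Nat.card Kˣ).Coprime n := by rwa [Nat.card_units, Nat.coprime_comm]
  simpa using congrArg Units.val
    (hunits.pow_left_bijective.injective (a₁ := Units.mk0 x hx) (a₂ := Units.mk0 y hy)
      (Units.ext (by simpa using hxy)))

theorem FiniteField.pow_card_sub_two_eq_inv {K : Type*} [GroupWithZero K] [Fintype K]
    (hK : 2 < Fintype.card K) (x : K) : x ^ (Fintype.card K - 2) = x⁻¹ := by
  obtain rfl | hx := eq_or_ne x 0
  · simp [zero_pow (show Fintype.card K - 2 ≠ 0 by omega)]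
  refine eq_inv_of_mul_eq_one_left ?_
  rw [← pow_succ, show Fintype.card K - 2 + 1 = Fintype.card K - 1 by omega,
    FiniteField.pow_card_sub_one_eq_one x hx]

theorem Submonoid.inv_mem_of_finite {G : Type*} [Group G] [Finite G] (M : Submonoid G) {g : G}
    (hg : g ∈ M) : g⁻¹ ∈ M := by
  obtain ⟨n, hn⟩ := (isOfFinOrder_of_finite g).mem_powers_iff_mem_zpowers.mpr
    (inv_mem (Subgroup.mem_zpowers g))
  exact hn ▸ M.pow_mem hg n

theorem Equiv.swap_zero_one_eq_addRight_neg_inv {F : Type*} [Field F] [DecidableEq F] :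
    swap (0 : F) 1 = Equiv.addRight 1 * Equiv.neg F * Equiv.inv F * Equiv.addRight 1 *
      Equiv.inv F * Equiv.addRight (-1) * Equiv.inv F := by
  ext x
  simp only [Perm.mul_apply, Equiv.coe_addRight, Equiv.neg_apply, Equiv.inv_apply]
  obtain rfl | hx0 := eq_or_ne x 0
  · simp
  obtain rfl | hx1 := eq_or_ne x 1
  · simp
  have h1x : 1 - x ≠ 0 := sub_ne_zero.mpr hx1.symm
  have h : (x⁻¹ + -1)⁻¹ + 1 = (1 - x)⁻¹ := by
    rw [show x⁻¹ + -1 = (1 - x) / x by field_simp; ring, inv_div, div_add_one h1x,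
      add_sub_cancel, one_div]
  rw [swap_apply_of_ne_of_ne hx0 hx1, h, inv_inv]
  ring

namespace Polynomial

variable {F : Type*} [Field F] [Fintype F]

def PermutesExtensionsOfDegree (f : F[X]) (k : ℕ) : Prop :=
  ∀ (K : Type) [Field K] [Fintype K] [Algebra F K],
    Fintype.card K = Fintype.card F ^ k → Bijective fun x : K => aeval x f

theorem permutesExtensionsOfDegree_X (k : ℕ) : (X : F[X]).PermutesExtensionsOfDegree k :=
  fun _ _ _ _ _ => by simp

theorem PermutesExtensionsOfDegree.comp {f g : F[X]} {k : ℕ}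
    (hf : f.PermutesExtensionsOfDegree k) (hg : g.PermutesExtensionsOfDegree k) :
    (f.comp g).PermutesExtensionsOfDegree k := fun K _ _ _ hK => by
  simp only [aeval_comp]
  exact (hf K hK).comp (hg K hK)

theorem permutesExtensionsOfDegree_C_mul_X_add_C {a : F} (ha : a ≠ 0) (b : F) (k : ℕ) :
    (C a * X + C b).PermutesExtensionsOfDegree k := fun K _ _ _ _ => by
  simpa using (Equiv.addRight (algebraMap F K b)).bijective.comp
    (mulLeft_bijective₀ _ ((_root_.map_ne_zero _).mpr ha))

theorem permutesExtensionsOfDegree_X_pow {n k : ℕ} (hn : n ≠ 0)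
    (h : n.Coprime (Fintype.card F ^ k - 1)) : (X ^ n : F[X]).PermutesExtensionsOfDegree k :=
  fun K _ _ _ hK => by
    simpa using FiniteField.pow_bijective_of_coprime (K := K) hn
      (by rwa [Nat.card_eq_fintype_card, hK])

variable (F) in
def inducedPermSubmonoid (S : Set ℕ) : Submonoid (Equiv.Perm F) where
  carrier := {σ | ∃ f : F[X], (∀ x, f.eval x = σ x) ∧ ∀ k ∈ S, f.PermutesExtensionsOfDegree k}
  one_mem' := ⟨X, by simp, fun k _ => permutesExtensionsOfDegree_X k⟩
  mul_mem' := by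
    rintro σ τ ⟨f, hf, hfS⟩ ⟨g, hg, hgS⟩
    exact ⟨f.comp g, by simp [hf, hg], fun k hk => (hfS k hk).comp (hgS k hk)⟩

theorem mem_inducedPermSubmonoid_of_affine {S : Set ℕ} {σ : Equiv.Perm F} {a b : F} (ha : a ≠ 0)
    (hσ : ∀ x, σ x = a * x + b) : σ ∈ inducedPermSubmonoid F S :=
  ⟨C a * X + C b, by simp [hσ], fun k _ => permutesExtensionsOfDegree_C_mul_X_add_C ha b k⟩

theorem inv_mem_inducedPermSubmonoid {S : Set ℕ} (hF : 2 < Fintype.card F)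
    (hS : ∀ k ∈ S, (Fintype.card F - 2).Coprime (Fintype.card F ^ k - 1)) :
    Equiv.inv F ∈ inducedPermSubmonoid F S :=
  ⟨X ^ (Fintype.card F - 2), fun x => by simp [FiniteField.pow_card_sub_two_eq_inv hF],
    fun k hk => permutesExtensionsOfDegree_X_pow (by omega) (hS k hk)⟩

theorem swap_mem_inducedPermSubmonoid [DecidableEq F] {S : Set ℕ} (hF : 2 < Fintype.card F)
    (hS : ∀ k ∈ S, (Fintype.card F - 2).Coprime (Fintype.card F ^ k - 1)) {a b : F}
    (hab : a ≠ b) : Equiv.swap a b ∈ inducedPermSubmonoid F S := by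
  have hadd (c : F) : Equiv.addRight c ∈ inducedPermSubmonoid F S :=
    mem_inducedPermSubmonoid_of_affine (b := c) one_ne_zero fun x => by simp
  have hneg : Equiv.neg F ∈ inducedPermSubmonoid F S :=
    mem_inducedPermSubmonoid_of_affine (b := 0) (neg_ne_zero.mpr one_ne_zero) fun x => by simp
  have hinv := inv_mem_inducedPermSubmonoid hF hS
  have h01 : Equiv.swap (0 : F) 1 ∈ inducedPermSubmonoid F S := by
    rw [Equiv.swap_zero_one_eq_addRight_neg_inv]
    exact mul_mem (mul_mem (mul_mem (mul_mem (mul_mem (mul_mem (hadd 1) hneg) hinv) (hadd 1))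
      hinv) (hadd (-1))) hinv
  let A : Equiv.Perm F := (Equiv.mulLeft₀ (b - a) (sub_ne_zero.mpr hab.symm)).trans
    (Equiv.addRight a)
  have hA : A ∈ inducedPermSubmonoid F S :=
    mem_inducedPermSubmonoid_of_affine (sub_ne_zero.mpr hab.symm) fun x => rfl
  have hconj : Equiv.swap a b = A * Equiv.swap 0 1 * A⁻¹ := by
    simpa [A] using Equiv.swap_apply_apply A 0 1
  rw [hconj]
  exact mul_mem (mul_mem hA h01) ((inducedPermSubmonoid F S).inv_mem_of_finite hA)

theorem inducedPermSubmonoid_eq_top {S : Set ℕ} (hF : 2 < Fintype.card F)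
    (hS : ∀ k ∈ S, (Fintype.card F - 2).Coprime (Fintype.card F ^ k - 1)) :
    inducedPermSubmonoid F S = ⊤ := by
  classical
  rw [eq_top_iff, ← Equiv.Perm.mclosure_isSwap, Submonoid.closure_le]
  rintro _ ⟨a, b, hab, rfl⟩
  exact swap_mem_inducedPermSubmonoid hF hS hab

end Polynomial

/-- Let `F` be a finite field with `q > 2` elements. Every permutation `σ` of
`F` is induced by an exceptional polynomial over `F`: there is a polynomial
`f ∈ F[x]` with `f(x) = σ(x)` for all `x ∈ F`, such that `f` induces a
permutation of the degree-`k` extension field with `q^k` elements for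
infinitely many positive integers `k`. -/
theorem exists_exceptional_polynomial_inducing_perm (F : Type*) [Field F]
    [Fintype F] (hF : 2 < Fintype.card F) (σ : Equiv.Perm F) :
    ∃ f : Polynomial F,
      (∀ x : F, f.eval x = σ x) ∧
      {k : ℕ | 0 < k ∧
        ∀ (K : Type) [Field K] [Fintype K] [Algebra F K],
          Fintype.card K = Fintype.card F ^ k →
            Function.Bijective (fun x : K => Polynomial.aeval x f)}.Infinite := by
  obtain ⟨f, hf, hfS⟩ : σ ∈ inducedPermSubmonoid F
      {k | (Fintype.card F - 2).Coprime (Fintype.card F ^ k - 1)} :=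
    (Submonoid.eq_top_iff' _).mp (inducedPermSubmonoid_eq_top hF fun _ hk => hk) σ
  exact ⟨f, hf, (Nat.setOf_coprime_sub_two_pow_sub_one_infinite hF).mono
    fun k hk => ⟨hk.1, hfS k hk.2⟩⟩
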